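/- arXiv:1502.06554 — 3 statements merged into one kernel-verified Lean document; each statement's English description precedes it below -/
import Mathlib

section
/- Let B be a real Banach space and q ∈ ℕ. There exist constants c_q, C_q > 0 depending only on q such that for every q-dimensional subspace E ⊆ B and any vectors v_1, …, v_q ∈ E, c_q · |v_q| · Π_{i=1}^{q−1} dist(v_i, span{v_j : i < j ≤ q}) ≤ m_E(P[v_1, …, v_q]) ≤ C_q · |v_q| · Π_{i=1}^{q−1} dist(v_i, span{v_j : i < j ≤ q}), where P[v_1,…,v_q] = {c_1 v_1 + ⋯ + c_q v_q : 0 ≤ c_i ≤ 1} is the parallelepiped spanned by v_1, …, v_q. -/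
open MeasureTheory Filter Metric Set
open scoped ENNReal NNReal Topology

namespace BanachMET

noncomputable section

/-- `ω q`: the Lebesgue volume of the Euclidean unit ball in `ℝ^q`. -/
def ballVol (q : ℕ) : ℝ≥0∞ :=
  volume (Metric.closedBall (0 : EuclideanSpace ℝ (Fin q)) 1)

/-- Extended logarithm of a real number, with the convention `log t = -∞` for `t ≤ 0`. -/
def elog (t : ℝ) : EReal := if t ≤ 0 then ⊥ else ((Real.log t : ℝ) : EReal)

/-- Extended logarithm on `ℝ≥0∞`, with `log 0 = -∞` and `log ⊤ = ⊤`. -/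
def elogE (t : ℝ≥0∞) : EReal :=
  if t = 0 then ⊥ else if t = ⊤ then ⊤ else ((Real.log t.toReal : ℝ) : EReal)

variable {B B' : Type*} [NormedAddCommGroup B] [NormedSpace ℝ B]
  [NormedAddCommGroup B'] [NormedSpace ℝ B']

section Volume
variable [MeasurableSpace B] [BorelSpace B] [MeasurableSpace B'] [BorelSpace B']

/-- The induced volume `m_E` on a finite dimensional subspace `E ⊆ B`: the unique
translation-invariant Borel measure on `E` assigning measure `ω_q` to the closed unit
ball of `E`, where `q = dim E`.  (Junk value `0` if `E` is infinite dimensional.) -/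
def inducedVolume (E : Submodule ℝ B) : Measure E := by
  classical
  exact if h : FiniteDimensional ℝ E then
    (ballVol (Module.finrank ℝ E) /
        (Module.finBasis ℝ E).addHaar (Metric.closedBall (0 : E) 1)) •
      (Module.finBasis ℝ E).addHaar
  else 0

/-- `det(A|E)`: the determinant of `A` on the finite dimensional subspace `E`,
defined as the ratio `m_{AE}(A(B_E)) / m_E(B_E)` (note `m_E(B_E) = ω_q`) if `A`
is injective on `E`, and `0` otherwise. -/
def detOn (A : B →L[ℝ] B') (E : Submodule ℝ B) : ℝ≥0∞ := by
  classical
  exact if Set.InjOn A (E : Set B) then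
    inducedVolume (E.map (A : B →ₗ[ℝ] B'))
        ((Subtype.val) ⁻¹' (A '' ((Subtype.val : E → B) '' Metric.closedBall (0 : E) 1))) /
      ballVol (Module.finrank ℝ E)
  else 0

/-- `V_q(A)`: the maximal `q`-dimensional volume growth of `A`
(with the convention `V_0(A) = 1`). -/
def maxVol (q : ℕ) (A : B →L[ℝ] B') : ℝ≥0∞ := by
  classical
  exact if q = 0 then 1 else
    ⨆ (E : Submodule ℝ B) (_ : FiniteDimensional ℝ E ∧ Module.finrank ℝ E = q), detOn A E

end Volume

/-- The measure of noncompactness `|A|_α`. -/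
def alphaMeasure (A : B →L[ℝ] B') : ℝ :=
  sInf {r : ℝ | 0 < r ∧ ∃ s : Finset B', (A '' Metric.closedBall 0 1) ⊆ ⋃ y ∈ s, Metric.ball y r}

/-- The annihilator `F° ⊆ B*` of a subspace `F ⊆ B` in the continuous dual. -/
def annih (F : Submodule ℝ B) : Submodule ℝ (B →L[ℝ] ℝ) where
  carrier := {ℓ | ∀ v ∈ F, ℓ v = 0}
  add_mem' := by
    intro a b ha hb v hv
    simp [ha v hv, hb v hv]
  zero_mem' := by intro v hv; simp
  smul_mem' := by
    intro c ℓ h v hv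
    simp [h v hv]

/-- The codimension of a subspace: the dimension of its annihilator in `B*`. -/
def codim (F : Submodule ℝ B) : ℕ := Module.finrank ℝ (annih F)

/-- `sin θ(E,F)` where `θ(E,F)` is the minimal angle from `E` to `F`. -/
def sinAngle (E F : Submodule ℝ B) : ℝ :=
  sInf {d : ℝ | ∃ e ∈ E, ‖e‖ = 1 ∧ ∃ f ∈ F, d = ‖e - f‖}

/-- The norm of the (possibly unbounded) projection onto `E` parallel to `F`. -/
def projNorm (E F : Submodule ℝ B) : ℝ :=
  sSup {r : ℝ | ∃ e ∈ E, ∃ f ∈ F, ‖e + f‖ ≤ 1 ∧ r = ‖e‖}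

/-- The Hausdorff distance `d_H` between the unit spheres of two subspaces. -/
def sphDist (E F : Submodule ℝ B) : ℝ :=
  Metric.hausdorffDist ((E : Set B) ∩ Metric.sphere (0 : B) 1)
    ((F : Set B) ∩ Metric.sphere (0 : B) 1)

/-- The gap `δ(U,V)`. -/
def gap (U V : Submodule ℝ B) : ℝ :=
  sSup {d : ℝ | ∃ u ∈ U, ‖u‖ = 1 ∧ d = Metric.infDist u (V : Set B)}

/-- `π` is the (bounded) projection onto `E` parallel to `F`. -/
def IsProjOnto (E F : Submodule ℝ B) (π : B →L[ℝ] B) : Prop :=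
  (∀ e ∈ E, π e = e) ∧ ∀ f ∈ F, π f = 0

/-- The Gelfand numbers `c_q(A)` (for `q ≥ 1`). -/
def gelfand (q : ℕ) (A : B →L[ℝ] B') : ℝ := by
  classical
  exact if q ≤ 1 then ‖A‖
  else sInf {c : ℝ | ∃ R : Submodule ℝ B, IsClosed (R : Set B) ∧ codim R = q - 1 ∧
    c = ‖A.comp R.subtypeL‖}

/-- `p` is an inner product on the subspace `E ⊆ B`. -/
structure IsInnerOn (E : Submodule ℝ B) (p : B → B → ℝ) : Prop where
  add_left : ∀ u ∈ E, ∀ v ∈ E, ∀ w ∈ E, p (u + v) w = p u w + p v w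
  smul_left : ∀ (c : ℝ), ∀ u ∈ E, ∀ v ∈ E, p (c • u) v = c * p u v
  symm : ∀ u ∈ E, ∀ v ∈ E, p u v = p v u
  posdef : ∀ u ∈ E, u ≠ 0 → 0 < p u u

/-- Iterates `T^n_x = T_{f^{n-1} x} ∘ ⋯ ∘ T_x` of the cocycle `T` over the base map `f`. -/
def iter {X : Type*} (T : X → B →L[ℝ] B) (f : X → X) : ℕ → X → B →L[ℝ] B
  | 0, _ => ContinuousLinearMap.id ℝ B
  | n + 1, x => (iter T f n (f x)).comp (T x)

/-- Uniform measurability: `T` is the pointwise norm limit of a sequence of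
finite-valued measurable maps. -/
def UniformlyMeasurable {X : Type*} [MeasurableSpace X] (T : X → B →L[ℝ] B) : Prop :=
  ∃ S : ℕ → X → B →L[ℝ] B,
    (∀ n, (Set.range (S n)).Finite) ∧
    (∀ n (A : B →L[ℝ] B), MeasurableSet {x | S n x = A}) ∧
    ∀ x, Tendsto (fun n => ‖S n x - T x‖) atTop (𝓝 0)

/-- The slow-growing set `F_λ(x)`. -/
def slowSpace {X : Type*} (T : X → B →L[ℝ] B) (f : X → X) (lam : ℝ) (x : X) : Set B :=
  {v : B | Filter.limsup (fun n : ℕ => (((n : ℝ)⁻¹ : ℝ) : EReal) * elog ‖iter T f n x v‖)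
      atTop ≤ (lam : EReal)}


/-!
In the coordinates `t ↦ ∑ tᵢ • vᵢ` of a linearly independent family, `m_E(P[v]) = ω_q / |K_v|`,
where `K_v ⊆ ℝ^q` is the unit ball of the norm `t ↦ |∑ tᵢ • vᵢ|`. Slice `K_v` along the first
coordinate and let `d = dist(v₀, span w)`, `w = (v₁, …, v_{q-1})`: the slice at height `s` is
empty unless `|s| ≤ 1/d`, a nonempty slice lies in a translate of `2 K_w`, and for `|s| ≤ 1/(4d)`
it contains a translate of `K_w / 2`. By Fubini, `|K_v| · d` and `|K_w|` agree up to a factor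
`2^q`, and induction gives `|K_v| · ∏ dist(vᵢ, span{vⱼ : j > i}) ∈ [2^{-k}, 2^k]` with
`k = q(q+1)/2`. For a dependent family both sides of the theorem vanish.
-/

open scoped Pointwise

theorem image_setOf_zero_lt {α : Type*} {n : ℕ} (v : Fin (n + 1) → α) :
    v '' {j | 0 < j} = range (Fin.tail v) := by
  change v '' Ioi 0 = range (v ∘ Fin.succ)
  rw [range_comp, Fin.range_succ]
  congr 1
  ext j
  simp [Fin.pos_iff_ne_zero]

theorem image_setOf_succ_lt {α : Type*} {n : ℕ} (v : Fin (n + 1) → α) (i : Fin n) :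
    v '' {j | i.succ < j} = Fin.tail v '' {j | i < j} := by
  change v '' Ioi i.succ = (v ∘ Fin.succ) '' Ioi i
  rw [image_comp, Fin.image_succ_Ioi]

theorem infDist_pos_of_notMem (F : Submodule ℝ B) [FiniteDimensional ℝ F] {x : B} (hx : x ∉ F) :
    0 < infDist x F :=
  (F.closed_of_finiteDimensional.notMem_iff_infDist_pos ⟨0, F.zero_mem⟩).1 hx

theorem abs_mul_infDist_le_norm_smul_add (F : Submodule ℝ B) (x : B) (s : ℝ) {y : B}
    (hy : y ∈ F) : |s| * infDist x F ≤ ‖s • x + y‖ := by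
  rcases eq_or_ne s 0 with rfl | hs
  · simp
  have hmem : -(s⁻¹ • y) ∈ (F : Set B) := F.neg_mem (F.smul_mem _ hy)
  calc |s| * infDist x F ≤ |s| * dist x (-(s⁻¹ • y)) :=
        mul_le_mul_of_nonneg_left (infDist_le_dist_of_mem hmem) (abs_nonneg s)
    _ = ‖s • x + y‖ := by
        rw [dist_eq_norm, sub_neg_eq_add, ← Real.norm_eq_abs, ← norm_smul, smul_add, smul_smul,
          mul_inv_cancel₀ hs, one_smul]

def distProd {q : ℕ} (v : Fin q → B) : ℝ :=
  ∏ i, infDist (v i) (Submodule.span ℝ (v '' {j | i < j}) : Set B)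

theorem distProd_succ {n : ℕ} (v : Fin (n + 1) → B) :
    distProd v =
      infDist (v 0) (Submodule.span ℝ (range (Fin.tail v))) * distProd (Fin.tail v) := by
  simp only [distProd, Fin.prod_univ_succ, image_setOf_zero_lt, image_setOf_succ_lt]
  rfl

theorem distProd_pos {q : ℕ} {v : Fin q → B} (hv : LinearIndependent ℝ v) : 0 < distProd v :=
  Finset.prod_pos fun i _ ↦
    have := FiniteDimensional.span_of_finite ℝ ((toFinite {j | i < j}).image v)
    infDist_pos_of_notMem _ (hv.notMem_span_image (by simp))

theorem distProd_eq_zero {q : ℕ} {v : Fin q → B} (hv : ¬LinearIndependent ℝ v) :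
    distProd v = 0 := by
  induction q with
  | zero => exact absurd linearIndependent_empty_type hv
  | succ n ih =>
    rw [← Fin.cons_self_tail v, linearIndependent_finCons, not_and_or, not_not] at hv
    rw [distProd_succ]
    rcases hv with hw | hx
    · rw [ih hw, mul_zero]
    · rw [infDist_zero_of_mem hx, zero_mul]

section Slices

variable {V : Type*} [NormedAddCommGroup V] [NormedSpace ℝ V] (L : V →ₗ[ℝ] B)

theorem vadd_preimage_closedBall_zero (u : V) (r : ℝ) :
    u +ᵥ L ⁻¹' closedBall 0 r = L ⁻¹' closedBall (L u) r := by
  ext x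
  rw [mem_vadd_set_iff_neg_vadd_mem]
  simp [dist_eq_norm, neg_add_eq_sub]

theorem smul_preimage_closedBall_zero_one {c : ℝ} (hc : 0 < c) :
    c • L ⁻¹' closedBall 0 1 = L ⁻¹' closedBall 0 c := by
  rw [← (IsUnit.mk0 c hc.ne').preimage_smul_set L, _root_.smul_closedBall _ _ zero_le_one,
    smul_zero, Real.norm_of_nonneg hc.le, mul_one]

variable [MeasurableSpace V] [BorelSpace V] [FiniteDimensional ℝ V] (μ : Measure V)
  [μ.IsAddHaarMeasure]

theorem measure_preimage_closedBall {c : ℝ} (hc : 0 < c) (u : V) :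
    μ (L ⁻¹' closedBall (L u) c) =
      ENNReal.ofReal (c ^ Module.finrank ℝ V) * μ (L ⁻¹' closedBall 0 1) := by
  rw [← vadd_preimage_closedBall_zero, measure_vadd, ← smul_preimage_closedBall_zero_one L hc,
    Measure.addHaar_smul, abs_of_pos (by positivity)]

theorem measure_preimage_closedBall_le_two_pow_mul (y : B) :
    μ (L ⁻¹' closedBall y 1) ≤ 2 ^ Module.finrank ℝ V * μ (L ⁻¹' closedBall 0 1) := by
  rcases (L ⁻¹' closedBall y 1).eq_empty_or_nonempty with h | ⟨u, hu⟩
  · simp [h]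
  rw [← ENNReal.ofReal_ofNat 2, ← ENNReal.ofReal_pow zero_le_two,
    ← measure_preimage_closedBall L μ two_pos u]
  refine measure_mono (preimage_mono (closedBall_subset_closedBall' ?_))
  rw [mem_preimage, mem_closedBall] at hu
  rw [dist_comm]
  linarith

theorem measure_preimage_closedBall_zero_le_two_pow_mul {y : B} {u : V}
    (hu : dist (L u) y ≤ 1 / 2) :
    μ (L ⁻¹' closedBall 0 1) ≤ 2 ^ Module.finrank ℝ V * μ (L ⁻¹' closedBall y 1) :=
  calc μ (L ⁻¹' closedBall 0 1)
      = 2 ^ Module.finrank ℝ V * μ (L ⁻¹' closedBall (L u) (1 / 2)) := by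
        rw [measure_preimage_closedBall L μ one_half_pos, ← mul_assoc, ← ENNReal.ofReal_ofNat 2,
          ← ENNReal.ofReal_pow zero_le_two, ← ENNReal.ofReal_mul (by positivity), ← mul_pow]
        norm_num
    _ ≤ 2 ^ Module.finrank ℝ V * μ (L ⁻¹' closedBall y 1) := by
        gcongr
        exact closedBall_subset_closedBall' (by linarith)

/- `L ⁻¹' closedBall (-(s • x)) 1` is the slice at height `s` of the unit ball of
`(s, u) ↦ ‖s • x + L u‖` on `ℝ × V`. -/
variable (x : B)

theorem lintegral_measure_slice_mul_infDist_le :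
    (∫⁻ s : ℝ, μ (L ⁻¹' closedBall (-(s • x)) 1)) *
        ENNReal.ofReal (infDist x (LinearMap.range L)) ≤
      2 ^ (Module.finrank ℝ V + 1) * μ (L ⁻¹' closedBall 0 1) := by
  rcases (infDist_nonneg (x := x) (s := LinearMap.range L)).eq_or_lt with hd | hd
  · simp [← hd]
  set d := infDist x (LinearMap.range L)
  set c := 2 ^ Module.finrank ℝ V * μ (L ⁻¹' closedBall 0 1)
  have hslice : ∀ s,
      μ (L ⁻¹' closedBall (-(s • x)) 1) ≤ (Icc (-d⁻¹) d⁻¹).indicator (fun _ ↦ c) s := by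
    intro s
    rcases (L ⁻¹' closedBall (-(s • x)) 1).eq_empty_or_nonempty with h | ⟨u, hu⟩
    · simp [h]
    have hs : |s| * d ≤ 1 := by
      rw [mem_preimage, mem_closedBall, dist_eq_norm, sub_neg_eq_add, add_comm] at hu
      exact (abs_mul_infDist_le_norm_smul_add _ x s (LinearMap.mem_range_self L u)).trans hu
    have hs' : |s| ≤ d⁻¹ := by rwa [← one_div, le_div_iff₀ hd]
    rw [Set.indicator_of_mem (show s ∈ Icc (-d⁻¹) d⁻¹ from abs_le.1 hs')]
    exact measure_preimage_closedBall_le_two_pow_mul L μ _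
  have hlen : ENNReal.ofReal (d⁻¹ - -d⁻¹) * ENNReal.ofReal d = 2 := by
    rw [← ENNReal.ofReal_mul' hd.le, sub_neg_eq_add, ← two_mul, mul_assoc,
      inv_mul_cancel₀ hd.ne', mul_one, ENNReal.ofReal_ofNat]
  calc (∫⁻ s : ℝ, μ (L ⁻¹' closedBall (-(s • x)) 1)) * ENNReal.ofReal d
      ≤ (∫⁻ s : ℝ, (Icc (-d⁻¹) d⁻¹).indicator (fun _ ↦ c) s) * ENNReal.ofReal d := by
        gcongr with s
        exact hslice s
    _ = 2 ^ (Module.finrank ℝ V + 1) * μ (L ⁻¹' closedBall 0 1) := by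
        rw [lintegral_indicator_const measurableSet_Icc, Real.volume_Icc, mul_assoc, hlen,
          pow_succ]
        ring

theorem measure_le_lintegral_measure_slice_mul_infDist
    (hd : 0 < infDist x (LinearMap.range L)) :
    μ (L ⁻¹' closedBall 0 1) ≤ 2 ^ (Module.finrank ℝ V + 1) *
      ((∫⁻ s : ℝ, μ (L ⁻¹' closedBall (-(s • x)) 1)) *
        ENNReal.ofReal (infDist x (LinearMap.range L))) := by
  set d := infDist x (LinearMap.range L)
  obtain ⟨_, ⟨t, rfl⟩, ht⟩ := (infDist_lt_iff ⟨0, (LinearMap.range L).zero_mem⟩).1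
    (by linarith : d < 2 * d)
  set r := (4 * d)⁻¹ with hr
  have hslice : ∀ s, (Icc (-r) r).indicator (fun _ ↦ μ (L ⁻¹' closedBall 0 1)) s ≤
      2 ^ Module.finrank ℝ V * μ (L ⁻¹' closedBall (-(s • x)) 1) := by
    intro s
    by_cases hs : s ∈ Icc (-r) r
    · rw [Set.indicator_of_mem hs]
      refine measure_preimage_closedBall_zero_le_two_pow_mul L μ (u := -(s • t)) ?_
      calc dist (L (-(s • t))) (-(s • x)) = |s| * dist x (L t) := by
            rw [map_neg, map_smul, dist_neg_neg, dist_smul₀, Real.norm_eq_abs, dist_comm]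
        _ ≤ r * (2 * d) := mul_le_mul (abs_le.2 hs) ht.le dist_nonneg (by positivity)
        _ = 1 / 2 := by rw [hr]; field_simp; ring
    · simp [Set.indicator_of_notMem hs]
  have hlen : ENNReal.ofReal (r - -r) * ENNReal.ofReal d = 2⁻¹ := by
    rw [← ENNReal.ofReal_mul' hd.le, ← ENNReal.ofReal_ofNat 2,
      ← ENNReal.ofReal_inv_of_pos two_pos, hr]
    congr 1
    field_simp
    ring
  calc μ (L ⁻¹' closedBall 0 1)
      = 2 * ((∫⁻ s : ℝ, (Icc (-r) r).indicator (fun _ ↦ μ (L ⁻¹' closedBall 0 1)) s) *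
          ENNReal.ofReal d) := by
        rw [lintegral_indicator_const measurableSet_Icc, Real.volume_Icc, mul_assoc, hlen,
          ← mul_assoc, mul_comm, ← mul_assoc,
          ENNReal.inv_mul_cancel two_ne_zero ENNReal.ofNat_ne_top, one_mul]
    _ ≤ 2 * ((∫⁻ s : ℝ, 2 ^ Module.finrank ℝ V * μ (L ⁻¹' closedBall (-(s • x)) 1)) *
          ENNReal.ofReal d) := by
        gcongr with s
        exact hslice s
    _ = 2 ^ (Module.finrank ℝ V + 1) *
          ((∫⁻ s : ℝ, μ (L ⁻¹' closedBall (-(s • x)) 1)) * ENNReal.ofReal d) := by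
        rw [lintegral_const_mul' _ _ (ENNReal.pow_ne_top ENNReal.ofNat_ne_top), pow_succ]
        ring

end Slices

theorem volume_eq_lintegral_volume_preimage_cons {n : ℕ} {S : Set (Fin (n + 1) → ℝ)}
    (hS : MeasurableSet S) :
    volume S = ∫⁻ s : ℝ, volume ((fun u : Fin n → ℝ ↦ (Fin.cons s u : Fin (n + 1) → ℝ)) ⁻¹' S) := by
  have e := (volume_preserving_piFinSuccAbove (fun _ : Fin (n + 1) ↦ ℝ) 0).symm
  rw [← e.measure_preimage hS.nullMeasurableSet, Measure.volume_eq_prod,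
    Measure.prod_apply (hS.preimage e.measurable)]
  congr! with s
  ext u
  simp [Fin.insertNthEquiv]

def coordBall {ι : Type*} [Fintype ι] (v : ι → B) : Set (ι → ℝ) :=
  Fintype.linearCombination ℝ v ⁻¹' closedBall 0 1

theorem linearCombination_cons {n : ℕ} (v : Fin (n + 1) → B) (s : ℝ) (u : Fin n → ℝ) :
    Fintype.linearCombination ℝ v (Fin.cons s u) =
      s • v 0 + Fintype.linearCombination ℝ (Fin.tail v) u := by
  simp [Fintype.linearCombination_apply, Fin.sum_univ_succ, Fin.tail]

theorem volume_coordBall_eq_lintegral {n : ℕ} (v : Fin (n + 1) → B) :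
    volume (coordBall v) = ∫⁻ s : ℝ,
      volume (Fintype.linearCombination ℝ (Fin.tail v) ⁻¹' closedBall (-(s • v 0)) 1) := by
  rw [volume_eq_lintegral_volume_preimage_cons (S := coordBall v) (isClosed_closedBall.preimage
    (Fintype.linearCombination ℝ v).continuous_of_finiteDimensional).measurableSet]
  refine lintegral_congr fun s ↦ congrArg volume (ext fun u ↦ ?_)
  simp [coordBall, linearCombination_cons, dist_eq_norm, add_comm]

theorem volume_coordBall_succ_bounds {n : ℕ} (v : Fin (n + 1) → B)
    (hv : v 0 ∉ Submodule.span ℝ (range (Fin.tail v))) :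
    volume (coordBall (Fin.tail v)) ≤ 2 ^ (n + 1) * (volume (coordBall v) *
        ENNReal.ofReal (infDist (v 0) (Submodule.span ℝ (range (Fin.tail v))))) ∧
      volume (coordBall v) * ENNReal.ofReal (infDist (v 0) (Submodule.span ℝ (range (Fin.tail v))))
        ≤ 2 ^ (n + 1) * volume (coordBall (Fin.tail v)) := by
  have := FiniteDimensional.span_of_finite ℝ (finite_range (Fin.tail v))
  have hrange := Fintype.range_linearCombination ℝ (Fin.tail v)
  have hlow := measure_le_lintegral_measure_slice_mul_infDist _ volume (v 0)
    (by rw [hrange]; exact infDist_pos_of_notMem _ hv)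
  have hup := lintegral_measure_slice_mul_infDist_le (Fintype.linearCombination ℝ (Fin.tail v))
    volume (v 0)
  rw [hrange, Module.finrank_fin_fun, ← volume_coordBall_eq_lintegral] at hup hlow
  exact ⟨hlow, hup⟩

theorem volume_coordBall_mul_distProd_bounds {q : ℕ} {v : Fin q → B}
    (hv : LinearIndependent ℝ v) :
    1 ≤ 2 ^ (q + 1).choose 2 * (volume (coordBall v) * ENNReal.ofReal (distProd v)) ∧
      volume (coordBall v) * ENNReal.ofReal (distProd v) ≤ 2 ^ (q + 1).choose 2 := by
  induction q with
  | zero =>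
    have : coordBall v = univ :=
      eq_univ_of_forall fun t ↦ by simp [coordBall, Fintype.linearCombination_apply]
    simp [distProd, this, volume_pi]
  | succ n ih =>
    rw [← Fin.cons_self_tail v, linearIndependent_finCons] at hv
    obtain ⟨hlow, hup⟩ := volume_coordBall_succ_bounds v hv.2
    obtain ⟨ihl, ihu⟩ := ih hv.1
    rw [distProd_succ, ENNReal.ofReal_mul infDist_nonneg, Nat.choose_succ_succ',
      Nat.choose_one_right, pow_add]
    set d := ENNReal.ofReal (infDist (v 0) (Submodule.span ℝ (range (Fin.tail v))))
    set P := ENNReal.ofReal (distProd (Fin.tail v))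
    constructor
    · calc 1 ≤ 2 ^ (n + 1).choose 2 * (volume (coordBall (Fin.tail v)) * P) := ihl
        _ ≤ 2 ^ (n + 1).choose 2 * (2 ^ (n + 1) * (volume (coordBall v) * d) * P) := by
          gcongr
        _ = 2 ^ (n + 1) * 2 ^ (n + 1).choose 2 * (volume (coordBall v) * (d * P)) := by ring
    · calc volume (coordBall v) * (d * P) = volume (coordBall v) * d * P := by ring
        _ ≤ 2 ^ (n + 1) * (volume (coordBall (Fin.tail v)) * P) := by
          rw [← mul_assoc]; gcongr
        _ ≤ 2 ^ (n + 1) * 2 ^ (n + 1).choose 2 := by gcongr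

theorem ballVol_ne_zero (q : ℕ) : ballVol q ≠ 0 := (measure_closedBall_pos volume _ one_pos).ne'

theorem ballVol_ne_top (q : ℕ) : ballVol q ≠ ⊤ := measure_closedBall_lt_top.ne

theorem parallelepiped_eq_setOf {ι : Type*} [Fintype ι] (v : ι → B) :
    parallelepiped v = {x | ∃ t : ι → ℝ, (∀ i, t i ∈ Icc (0 : ℝ) 1) ∧ x = ∑ i, t i • v i} := by
  ext x
  simp only [mem_parallelepiped_iff, mem_Icc, Pi.le_def, forall_and, Pi.zero_apply, Pi.one_apply]
  rfl

theorem preimage_val_parallelepiped {ι : Type*} [Fintype ι] (E : Submodule ℝ B) {v : ι → B}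
    (hv : ∀ i, v i ∈ E) :
    Subtype.val ⁻¹' parallelepiped v = parallelepiped (fun i ↦ (⟨v i, hv i⟩ : E)) := by
  rw [← Subtype.val_injective.preimage_image (parallelepiped _)]
  exact congrArg _ (image_parallelepiped E.subtype fun i ↦ (⟨v i, hv i⟩ : E)).symm

section InducedVolume

variable [MeasurableSpace B] [BorelSpace B]

theorem inducedVolume_eq_smul (E : Submodule ℝ B) [FiniteDimensional ℝ E] (μ : Measure E)
    [μ.IsAddHaarMeasure] :
    inducedVolume E = (ballVol (Module.finrank ℝ E) / μ (closedBall 0 1)) • μ := by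
  rw [inducedVolume, dif_pos ‹_›]
  set ν := (Module.finBasis ℝ E).addHaar
  have hk : (ν.addHaarScalarFactor μ : ℝ≥0∞) ≠ 0 := by
    simpa using (Measure.addHaarScalarFactor_pos_of_isAddHaarMeasure ν μ).ne'
  rw [Measure.isAddLeftInvariant_eq_smul ν μ, Measure.smul_apply]
  simp only [ENNReal.smul_def, smul_smul, smul_eq_mul]
  rw [mul_comm, ← mul_div_assoc, ENNReal.mul_div_mul_left _ _ hk ENNReal.coe_ne_top]

theorem inducedVolume_submodule_eq_zero (E : Submodule ℝ B) [FiniteDimensional ℝ E]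
    {F : Submodule ℝ E} (hF : F ≠ ⊤) : inducedVolume E F = 0 := by
  rw [inducedVolume_eq_smul E Measure.addHaar, Measure.smul_apply, Measure.addHaar_submodule _ _ hF,
    smul_zero]

theorem inducedVolume_parallelepiped {q : ℕ} (E : Submodule ℝ B) [FiniteDimensional ℝ E]
    (hq : Module.finrank ℝ E = q) {v : Fin q → B} (hv : ∀ i, v i ∈ E)
    (hli : LinearIndependent ℝ v) :
    inducedVolume E (Subtype.val ⁻¹' parallelepiped v) = ballVol q / volume (coordBall v) := by
  set vE : Fin q → E := fun i ↦ ⟨v i, hv i⟩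
  set b := basisOfLinearIndependentOfCardEqFinrank' vE (.of_comp E.subtype hli) (by simp [hq])
  set T := b.equivFunL.symm
  have hTv : ∀ t, (T t : B) = Fintype.linearCombination ℝ v t := by
    intro t
    change ((b.equivFun.symm t : E) : B) = _
    simp [b, vE, Module.Basis.equivFun_symm_apply, Fintype.linearCombination_apply]
  have hT : ∀ S : Set B, T ⁻¹' (Subtype.val ⁻¹' S) = Fintype.linearCombination ℝ v ⁻¹' S :=
    fun S ↦ ext fun t ↦ by simp [hTv]
  have hmap : ∀ S, volume.map T S = volume (T ⁻¹' S) :=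
    T.toHomeomorph.toMeasurableEquiv.map_apply
  have hball : T ⁻¹' closedBall 0 1 = coordBall v := ext fun t ↦ by simp [coordBall, ← hTv]
  have hpar : volume (Fintype.linearCombination ℝ v ⁻¹' parallelepiped v) = 1 := by
    change volume (_ ⁻¹' (Fintype.linearCombination ℝ v '' Icc 0 1)) = 1
    rw [hli.fintypeLinearCombination_injective.preimage_image, Real.volume_Icc_pi]
    simp
  rw [inducedVolume_eq_smul E (volume.map T), Measure.smul_apply, smul_eq_mul, hmap, hmap, hT,
    hpar, mul_one, hball, hq]

theorem inducedVolume_parallelepiped_eq_zero {q : ℕ} (E : Submodule ℝ B) [FiniteDimensional ℝ E]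
    (hq : Module.finrank ℝ E = q) {v : Fin q → B} (hv : ∀ i, v i ∈ E)
    (hli : ¬LinearIndependent ℝ v) :
    inducedVolume E (Subtype.val ⁻¹' parallelepiped v) = 0 := by
  set vE : Fin q → E := fun i ↦ ⟨v i, hv i⟩
  have hspan : Submodule.span ℝ (range vE) ≠ ⊤ := fun htop ↦ hli <|
    (linearIndependent_of_top_le_span_of_card_eq_finrank htop.ge (by simp [hq])).map'
      E.subtype E.ker_subtype
  refine measure_mono_null ?_ (inducedVolume_submodule_eq_zero E hspan)
  rw [preimage_val_parallelepiped E hv, ← Fintype.range_linearCombination]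
  rintro _ ⟨t, -, rfl⟩
  exact ⟨t, rfl⟩

theorem inducedVolume_parallelepiped_bounds {q : ℕ} (E : Submodule ℝ B) [FiniteDimensional ℝ E]
    (hq : Module.finrank ℝ E = q) {v : Fin q → B} (hv : ∀ i, v i ∈ E)
    (hli : LinearIndependent ℝ v) :
    ballVol q / 2 ^ (q + 1).choose 2 * ENNReal.ofReal (distProd v) ≤
        inducedVolume E (Subtype.val ⁻¹' parallelepiped v) ∧
      inducedVolume E (Subtype.val ⁻¹' parallelepiped v) ≤
        ballVol q * 2 ^ (q + 1).choose 2 * ENNReal.ofReal (distProd v) := by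
  obtain ⟨hlow, hup⟩ := volume_coordBall_mul_distProd_bounds hli
  have hp : ENNReal.ofReal (distProd v) ≠ 0 := by simpa using distProd_pos hli
  set K : ℝ≥0∞ := 2 ^ (q + 1).choose 2
  set V := volume (coordBall v)
  have hV0 : V ≠ 0 := by rintro h; simp [h] at hlow
  have hVt : V ≠ ⊤ := by
    rintro h
    simp [h, ENNReal.top_mul hp, K] at hup
  rw [inducedVolume_parallelepiped E hq hv hli]
  constructor
  · rw [ENNReal.le_div_iff_mul_le (.inl hV0) (.inl hVt), mul_assoc, mul_comm (ENNReal.ofReal _)]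
    calc ballVol q / K * (V * ENNReal.ofReal (distProd v))
        ≤ ballVol q / K * K := by gcongr
      _ = ballVol q := ENNReal.div_mul_cancel (by simp [K]) (by simp [K])
  · rw [ENNReal.div_le_iff_le_mul (.inl hV0) (.inl hVt)]
    calc ballVol q ≤ ballVol q * (K * (V * ENNReal.ofReal (distProd v))) :=
          le_mul_of_one_le_right' hlow
      _ = ballVol q * K * ENNReal.ofReal (distProd v) * V := by ring

end InducedVolume

theorem statement4_general
    {B : Type*} [NormedAddCommGroup B] [NormedSpace ℝ B]
    [MeasurableSpace B] [BorelSpace B] (q : ℕ) :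
    ∃ c C : ℝ, 0 < c ∧ 0 < C ∧
      ∀ (E : Submodule ℝ B), FiniteDimensional ℝ E → Module.finrank ℝ E = q →
      ∀ v : Fin q → B, (∀ i, v i ∈ E) →
        ENNReal.ofReal (c * ∏ i, Metric.infDist (v i)
            (Submodule.span ℝ (v '' {j | i < j}) : Set B)) ≤
          inducedVolume E ((Subtype.val : E → B) ⁻¹'
            {x : B | ∃ t : Fin q → ℝ, (∀ i, t i ∈ Set.Icc (0 : ℝ) 1) ∧ x = ∑ i, t i • v i}) ∧
        inducedVolume E ((Subtype.val : E → B) ⁻¹'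
            {x : B | ∃ t : Fin q → ℝ, (∀ i, t i ∈ Set.Icc (0 : ℝ) 1) ∧ x = ∑ i, t i • v i}) ≤
          ENNReal.ofReal (C * ∏ i, Metric.infDist (v i)
            (Submodule.span ℝ (v '' {j | i < j}) : Set B)) := by
  set K : ℝ≥0∞ := 2 ^ (q + 1).choose 2
  have hK : K ≠ 0 ∧ K ≠ ⊤ := ⟨by simp [K], by simp [K]⟩
  have hc : ballVol q / K ≠ ⊤ := ENNReal.div_ne_top (ballVol_ne_top q) hK.1
  have hC : ballVol q * K ≠ ⊤ := ENNReal.mul_ne_top (ballVol_ne_top q) hK.2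
  refine ⟨(ballVol q / K).toReal, (ballVol q * K).toReal,
    ENNReal.toReal_pos (ENNReal.div_ne_zero.2 ⟨ballVol_ne_zero q, hK.2⟩) hc,
    ENNReal.toReal_pos (mul_ne_zero (ballVol_ne_zero q) hK.1) hC, fun E _ hq v hv ↦ ?_⟩
  rw [← parallelepiped_eq_setOf]
  change ENNReal.ofReal (_ * distProd v) ≤ _ ∧ _ ≤ ENNReal.ofReal (_ * distProd v)
  by_cases hli : LinearIndependent ℝ v
  · rw [ENNReal.ofReal_mul ENNReal.toReal_nonneg, ENNReal.ofReal_mul ENNReal.toReal_nonneg,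
      ENNReal.ofReal_toReal hc, ENNReal.ofReal_toReal hC]
    exact inducedVolume_parallelepiped_bounds E hq hv hli
  · simp [distProd_eq_zero hli, inducedVolume_parallelepiped_eq_zero E hq hv hli]

theorem statement4
    {B : Type*} [NormedAddCommGroup B] [NormedSpace ℝ B] [CompleteSpace B]
    [MeasurableSpace B] [BorelSpace B] (q : ℕ) (hq : 1 ≤ q) :
    ∃ c C : ℝ, 0 < c ∧ 0 < C ∧
      ∀ (E : Submodule ℝ B), FiniteDimensional ℝ E → Module.finrank ℝ E = q →
      ∀ v : Fin q → B, (∀ i, v i ∈ E) →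
        ENNReal.ofReal (c * ∏ i, Metric.infDist (v i)
            (Submodule.span ℝ (v '' {j | i < j}) : Set B)) ≤
          inducedVolume E ((Subtype.val : E → B) ⁻¹'
            {x : B | ∃ t : Fin q → ℝ, (∀ i, t i ∈ Set.Icc (0 : ℝ) 1) ∧ x = ∑ i, t i • v i}) ∧
        inducedVolume E ((Subtype.val : E → B) ⁻¹'
            {x : B | ∃ t : Fin q → ℝ, (∀ i, t i ∈ Set.Icc (0 : ℝ) 1) ∧ x = ∑ i, t i • v i}) ≤
          ENNReal.ofReal (C * ∏ i, Metric.infDist (v i)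
            (Submodule.span ℝ (v '' {j | i < j}) : Set B)) :=
  statement4_general q

end
end BanachMET
end

section
/- Let B be a real Banach space and q ∈ ℕ. Let U, V be closed subspaces of B such that either dim U = dim V = q or codim U = codim V = q. If δ(U, V) < 1/q, then δ(V, U) ≤ q δ(U, V) / (1 − q δ(U, V)). -/
/-! If `dim U = dim V = q`, take an Auerbach basis `u₁, …, u_q` of `U` (unit vectors whose
coordinate functionals have norm `≤ 1`; it maximizes the determinant over the product of unit
balls) and nearest points `vᵢ ∈ V`, so `‖uᵢ - vᵢ‖ ≤ δ(U,V)`. The linear map `T uᵢ = vᵢ` satisfies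
`‖T x - x‖ ≤ q δ ‖x‖`; as `q δ < 1` it is injective, hence onto `V` by dimension count, and a unit
vector `w = T x` of `V` has `‖x‖ ≤ 1 / (1 - q δ)`, so `dist(w, U) ≤ ‖w - x‖ ≤ q δ / (1 - q δ)`.

If `codim U = codim V = q`, Hahn–Banach gives `δ(V°, U°) ≤ δ(U, V)` and `δ(V, U) ≤ δ(U°, V°)`,
and the finite-dimensional case applied to `V°, U°` concludes. -/

open MeasureTheory Filter Metric Set
open scoped ENNReal NNReal Topology

namespace BanachMET

noncomputable section

variable {B B' : Type*} [NormedAddCommGroup B] [NormedSpace ℝ B]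
  [NormedAddCommGroup B'] [NormedSpace ℝ B']

lemma gap_nonneg (U V : Submodule ℝ B) : 0 ≤ gap U V :=
  Real.sSup_nonneg <| by rintro _ ⟨u, -, -, rfl⟩; exact infDist_nonneg

lemma gap_le {U V : Submodule ℝ B} {c : ℝ} (hc : 0 ≤ c)
    (h : ∀ u ∈ U, ‖u‖ = 1 → infDist u (V : Set B) ≤ c) : gap U V ≤ c :=
  Real.sSup_le (by rintro _ ⟨u, hu, hu1, rfl⟩; exact h u hu hu1) hc

lemma infDist_le_gap {U V : Submodule ℝ B} {u : B} (hu : u ∈ U) (hu1 : ‖u‖ = 1) :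
    infDist u (V : Set B) ≤ gap U V := by
  refine le_csSup ⟨1, ?_⟩ ⟨u, hu, hu1, rfl⟩
  rintro _ ⟨u, -, hu1, rfl⟩
  simpa [hu1] using infDist_le_dist_of_mem (x := u) V.zero_mem

lemma norm_quotient_mk_eq_infDist (V : Submodule ℝ B) (x : B) :
    ‖(Submodule.Quotient.mk x : B ⧸ V)‖ = infDist x (V : Set B) :=
  QuotientAddGroup.norm_mk x

lemma infDist_le_gap_mul_norm {U V : Submodule ℝ B} {x : B} (hx : x ∈ U) :
    infDist x (V : Set B) ≤ gap U V * ‖x‖ := by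
  have hnorm : ‖V.mkQL.comp U.subtypeL‖ ≤ gap U V :=
    ContinuousLinearMap.opNorm_le_of_unit_norm (gap_nonneg U V) fun u hu1 => by
      simpa [norm_quotient_mk_eq_infDist] using infDist_le_gap u.2 hu1
  simpa [norm_quotient_mk_eq_infDist] using
    (V.mkQL.comp U.subtypeL).le_of_opNorm_le hnorm ⟨x, hx⟩

lemma abs_apply_le_infDist_of_mem_annih {V : Submodule ℝ B} {φ : B →L[ℝ] ℝ}
    (hφ : φ ∈ annih V) (hφ1 : ‖φ‖ ≤ 1) (x : B) : |φ x| ≤ infDist x (V : Set B) := by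
  refine (le_infDist ⟨0, V.zero_mem⟩).2 fun v hv => ?_
  calc |φ x| = ‖φ (x - v)‖ := by rw [map_sub, hφ v hv, sub_zero, Real.norm_eq_abs]
    _ ≤ ‖φ‖ * ‖x - v‖ := φ.le_opNorm _
    _ ≤ dist x v := by rw [dist_eq_norm]; exact mul_le_of_le_one_left (norm_nonneg _) hφ1

lemma abs_apply_le_infDist_annih {V : Submodule ℝ B} {w : B} (hw : w ∈ V) (hw1 : ‖w‖ ≤ 1)
    (ℓ : B →L[ℝ] ℝ) : |ℓ w| ≤ infDist ℓ (annih V : Set (B →L[ℝ] ℝ)) := by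
  refine (le_infDist ⟨0, (annih V).zero_mem⟩).2 fun χ hχ => ?_
  calc |ℓ w| = ‖(ℓ - χ) w‖ := by
        rw [sub_apply, hχ w hw, sub_zero, Real.norm_eq_abs]
    _ ≤ ‖ℓ - χ‖ * ‖w‖ := (ℓ - χ).le_opNorm w
    _ ≤ dist ℓ χ := by rw [dist_eq_norm]; exact mul_le_of_le_one_right (norm_nonneg _) hw1

lemma gap_annih_le_gap (U V : Submodule ℝ B) : gap (annih V) (annih U) ≤ gap U V := by
  refine gap_le (gap_nonneg U V) fun φ hφ hφ1 => ?_
  have hres : ‖φ.comp U.subtypeL‖ ≤ gap U V :=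
    ContinuousLinearMap.opNorm_le_bound _ (gap_nonneg U V) fun x =>
      (abs_apply_le_infDist_of_mem_annih hφ hφ1.le x).trans (infDist_le_gap_mul_norm x.2)
  obtain ⟨g, hg, hgnorm⟩ := exists_extension_norm_eq U (φ.comp U.subtypeL)
  have hφg : φ - g ∈ annih U := fun x hx => by
    simpa using congr(φ x - $(hg ⟨x, hx⟩))
  calc infDist φ (annih U : Set (B →L[ℝ] ℝ)) ≤ dist φ (φ - g) := infDist_le_dist_of_mem hφg
    _ = ‖g‖ := by rw [dist_eq_norm, sub_sub_cancel]
    _ ≤ gap U V := hgnorm ▸ hres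

lemma gap_le_gap_annih (U V : Submodule ℝ B) :
    gap V U ≤ gap (annih U) (annih V) := by
  refine gap_le (gap_nonneg _ _) fun w hw hw1 => ?_
  obtain ⟨ψ, hψ1, hψw⟩ := exists_dual_vector'' ℝ (Submodule.Quotient.mk w : B ⧸ U)
  let ℓ : B →L[ℝ] ℝ := ψ.comp U.mkQL
  have hℓ1 : ‖ℓ‖ ≤ 1 := ContinuousLinearMap.opNorm_le_bound _ zero_le_one fun x => by
    calc ‖ℓ x‖ ≤ ‖ψ‖ * ‖(Submodule.Quotient.mk x : B ⧸ U)‖ := ψ.le_opNorm _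
      _ ≤ 1 * ‖x‖ :=
        mul_le_mul hψ1 (Submodule.Quotient.norm_mk_le U x) (norm_nonneg _) zero_le_one
  have hℓU : ℓ ∈ annih U := fun x hx => by
    simp [ℓ, (Submodule.Quotient.mk_eq_zero U).2 hx]
  calc infDist w (U : Set B) = ℓ w := by
        rw [← norm_quotient_mk_eq_infDist]; exact hψw.symm
    _ ≤ |ℓ w| := le_abs_self _
    _ ≤ infDist ℓ (annih V : Set (B →L[ℝ] ℝ)) := abs_apply_le_infDist_annih hw hw1.le ℓ
    _ ≤ gap (annih U) (annih V) * ‖ℓ‖ := infDist_le_gap_mul_norm hℓU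
    _ ≤ gap (annih U) (annih V) := mul_le_of_le_one_right (gap_nonneg _ _) hℓ1

lemma exists_infDist_eq_dist_of_finiteDimensional (V : Submodule ℝ B) [FiniteDimensional ℝ V]
    (x : B) :
    ∃ v ∈ V, infDist x (V : Set B) = dist x v := by
  rw [← infDist_inter_closedBall_of_mem V.zero_mem]
  have hcpt : IsCompact ((V : Set B) ∩ closedBall x (dist 0 x)) := by
    have hball : IsCompact (closedBall (0 : V) (dist 0 x + dist x 0)) := isCompact_closedBall _ _
    refine (hball.image continuous_subtype_val).of_isClosed_subset
      (V.closed_of_finiteDimensional.inter isClosed_closedBall) ?_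
    rintro y ⟨hyV, hy⟩
    refine ⟨⟨y, hyV⟩, ?_, rfl⟩
    rw [mem_closedBall] at hy ⊢
    exact (dist_triangle y x 0).trans (by gcongr)
  obtain ⟨v, hv, hd⟩ := hcpt.exists_infDist_eq_dist ⟨0, V.zero_mem, by simp [dist_comm]⟩ x
  exact ⟨v, hv.1, hd⟩

theorem exists_auerbach_basis (F : Type*) [NormedAddCommGroup F] [NormedSpace ℝ F]
    [FiniteDimensional ℝ F] :
    ∃ b : Module.Basis (Fin (Module.finrank ℝ F)) ℝ F,
      (∀ i, ‖b i‖ = 1) ∧ ∀ i y, |b.repr y i| ≤ ‖y‖ := by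
  classical
  set e := Module.finBasis ℝ F
  have hdet : Continuous fun x => e.det x := by
    simp only [e.det_apply]
    exact Continuous.matrix_det <| continuous_matrix fun i j =>
      (e.coord i).continuous_of_finiteDimensional.comp (continuous_apply j)
  obtain ⟨x, hxK, hmax⟩ :=
    (isCompact_univ_pi fun _ => isCompact_closedBall (0 : F) 1).exists_isMaxOn
      ⟨0, by simp⟩ (continuous_abs.comp hdet).continuousOn
  have hx1 : ∀ i, ‖x i‖ ≤ 1 := fun i => by simpa using hxK i (mem_univ i)
  have hdetx : e.det x ≠ 0 := by
    have hnorm : (fun i => ‖e i‖⁻¹ • e i) ∈ univ.pi fun _ => closedBall (0 : F) 1 := by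
      intro i _
      simp [norm_smul, e.ne_zero i]
    have hpos : 0 < |e.det fun i => ‖e i‖⁻¹ • e i| := by
      rw [e.det.map_smul_univ, e.det_self, smul_eq_mul, mul_one, abs_pos]
      exact Finset.prod_ne_zero_iff.2 fun i _ => inv_ne_zero (norm_ne_zero_iff.2 (e.ne_zero i))
    exact abs_pos.1 (hpos.trans_le (hmax hnorm))
  have hx := e.is_basis_iff_det.2 (isUnit_iff_ne_zero.2 hdetx)
  set b := Module.Basis.mk hx.1 hx.2.ge
  -- Cramer's rule
  have hcoord : ∀ i y, e.det x * b.coord i y = e.det (Function.update x i y) := fun i y =>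
    congr($(e.det_smul_mk_coord_eq_det_update hx.1 hx.2.ge i) y)
  have hcoord_le : ∀ i y, |b.repr y i| ≤ ‖y‖ := by
    intro i
    have : ‖(b.coord i).toContinuousLinearMap‖ ≤ 1 := by
      refine ContinuousLinearMap.opNorm_le_of_unit_norm zero_le_one fun y hy1 => ?_
      have hy : Function.update x i y ∈ univ.pi fun _ => closedBall (0 : F) 1 := by
        intro j _
        rcases eq_or_ne j i with rfl | hj
        · simp [hy1]
        · simpa [hj] using hxK j (mem_univ j)
      have hle : |e.det (Function.update x i y)| ≤ |e.det x| := hmax hy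
      rw [← hcoord, abs_mul] at hle
      rw [LinearMap.coe_toContinuousLinearMap', Real.norm_eq_abs]
      exact (mul_le_iff_le_one_right (abs_pos.2 hdetx)).1 hle
    intro y
    simpa using (b.coord i).toContinuousLinearMap.le_of_opNorm_le this y
  refine ⟨b, fun i => le_antisymm ?_ ?_, hcoord_le⟩
  · simpa only [b, Module.Basis.coe_mk] using hx1 i
  · simpa only [b, Module.Basis.coe_mk, ← Module.Basis.coord_apply, Module.Basis.mk_coord_apply_eq,
      abs_one] using hcoord_le i (x i)

section NearIdentity

variable {U V : Submodule ℝ B} (T : U →ₗ[ℝ] V) {ε : ℝ}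

lemma injective_of_norm_sub_le (hε : ε < 1) (h : ∀ x : U, ‖(T x : B) - x‖ ≤ ε * ‖x‖) :
    Function.Injective T := by
  refine (injective_iff_map_eq_zero T).2 fun x hx => norm_eq_zero.1 ?_
  have := h x
  rw [hx, ZeroMemClass.coe_zero, zero_sub, norm_neg, Submodule.norm_coe] at this
  nlinarith [norm_nonneg x]

lemma gap_le_of_surjective_of_norm_sub_le (hT : Function.Surjective T) (hε0 : 0 ≤ ε)
    (hε : ε < 1) (h : ∀ x : U, ‖(T x : B) - x‖ ≤ ε * ‖x‖) : gap V U ≤ ε / (1 - ε) := by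
  refine gap_le (div_nonneg hε0 (sub_nonneg.2 hε.le)) fun w hw hw1 => ?_
  obtain ⟨x, hx⟩ := hT ⟨w, hw⟩
  have hTx : (T x : B) = w := congrArg Subtype.val hx
  have hx1 : (1 - ε) * ‖x‖ ≤ 1 := by
    have hTx1 : ‖(T x : B)‖ = 1 := hTx ▸ hw1
    have := norm_sub_norm_le (x : B) (T x : B)
    rw [norm_sub_rev, Submodule.norm_coe, hTx1] at this
    linarith [h x]
  calc infDist w (U : Set B) ≤ dist w x := infDist_le_dist_of_mem x.2
    _ ≤ ε * ‖x‖ := by rw [dist_eq_norm, ← hTx]; exact h x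
    _ ≤ ε / (1 - ε) := by
      rw [le_div_iff₀ (sub_pos.2 hε)]
      nlinarith [mul_le_mul_of_nonneg_left hx1 hε0]

end NearIdentity

lemma exists_linearMap_norm_sub_le (U V : Submodule ℝ B) [FiniteDimensional ℝ U]
    [FiniteDimensional ℝ V] :
    ∃ T : U →ₗ[ℝ] V, ∀ x : U, ‖(T x : B) - x‖ ≤ Module.finrank ℝ U * gap U V * ‖x‖ := by
  obtain ⟨b, hb1, hbrepr⟩ := exists_auerbach_basis U
  have hv : ∀ i, ∃ v ∈ V, dist v (b i : B) ≤ gap U V := fun i => by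
    obtain ⟨v, hv, hd⟩ := exists_infDist_eq_dist_of_finiteDimensional V (b i : B)
    exact ⟨v, hv, dist_comm v (b i : B) ▸ hd ▸ infDist_le_gap (b i).2 (hb1 i)⟩
  choose v hvV hvd using hv
  refine ⟨b.constr ℝ fun i => (⟨v i, hvV i⟩ : V), fun x => ?_⟩
  calc ‖((b.constr ℝ fun i => (⟨v i, hvV i⟩ : V)) x : B) - x‖
      = ‖∑ i, b.repr x i • (v i - b i)‖ := by
        have hx : (x : B) = ∑ i, b.repr x i • (b i : B) := by
          conv_lhs => rw [← b.sum_repr x]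
          simp only [Submodule.coe_sum, Submodule.coe_smul]
        rw [hx, Module.Basis.constr_apply_fintype]
        simp only [Submodule.coe_sum, Submodule.coe_smul, Module.Basis.equivFun_apply, smul_sub,
          Finset.sum_sub_distrib]
    _ ≤ ∑ _i, ‖x‖ * gap U V := norm_sum_le_of_le _ fun i _ => by
        rw [norm_smul, Real.norm_eq_abs, ← dist_eq_norm]
        exact mul_le_mul (hbrepr i x) (hvd i) dist_nonneg (norm_nonneg x)
    _ = Module.finrank ℝ U * gap U V * ‖x‖ := by
        rw [Finset.sum_const, Finset.card_univ, Fintype.card_fin, nsmul_eq_mul]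
        ring

theorem gap_le_of_finrank_eq {U V : Submodule ℝ B} [FiniteDimensional ℝ U] [FiniteDimensional ℝ V]
    {q : ℕ} (hU : Module.finrank ℝ U = q) (hV : Module.finrank ℝ V = q) (hq : q * gap U V < 1) :
    gap V U ≤ q * gap U V / (1 - q * gap U V) := by
  obtain ⟨T, hT⟩ := exists_linearMap_norm_sub_le U V
  rw [hU] at hT
  have hsurj : Function.Surjective T :=
    (LinearMap.injective_iff_surjective_of_finrank_eq_finrank (hU.trans hV.symm)).1
      (injective_of_norm_sub_le T hq hT)
  exact gap_le_of_surjective_of_norm_sub_le T hsurj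
    (mul_nonneg q.cast_nonneg (gap_nonneg U V)) hq hT

lemma div_one_sub_le_div_one_sub {a b : ℝ} (hab : a ≤ b) (hb : b < 1) :
    a / (1 - a) ≤ b / (1 - b) := by
  rw [div_le_div_iff₀ (by linarith) (by linarith)]
  nlinarith

theorem statement8_general
    {B : Type*} [NormedAddCommGroup B] [NormedSpace ℝ B]
    (q : ℕ) (U V : Submodule ℝ B)
    (h : (FiniteDimensional ℝ U ∧ FiniteDimensional ℝ V ∧
            Module.finrank ℝ U = q ∧ Module.finrank ℝ V = q) ∨
         (IsClosed (U : Set B) ∧ IsClosed (V : Set B) ∧ codim U = q ∧ codim V = q))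
    (hgap : gap U V < 1 / (q : ℝ)) :
    gap V U ≤ (q : ℝ) * gap U V / (1 - (q : ℝ) * gap U V) := by
  have hq : 0 < q := Nat.pos_of_ne_zero <| by
    rintro rfl
    simp only [Nat.cast_zero, div_zero] at hgap
    exact hgap.not_ge (gap_nonneg U V)
  have hqgap : (q : ℝ) * gap U V < 1 := (lt_div_iff₀' (by exact_mod_cast hq)).1 hgap
  rcases h with ⟨_, _, hU, hV⟩ | ⟨-, -, hU, hV⟩
  · exact gap_le_of_finrank_eq hU hV hqgap
  · unfold codim at hU hV
    have : FiniteDimensional ℝ (annih U) := .of_finrank_pos (by omega)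
    have : FiniteDimensional ℝ (annih V) := .of_finrank_pos (by omega)
    have hdual : (q : ℝ) * gap (annih V) (annih U) ≤ q * gap U V :=
      mul_le_mul_of_nonneg_left (gap_annih_le_gap U V) q.cast_nonneg
    calc gap V U ≤ gap (annih U) (annih V) := gap_le_gap_annih U V
      _ ≤ q * gap (annih V) (annih U) / (1 - q * gap (annih V) (annih U)) :=
        gap_le_of_finrank_eq hV hU (hdual.trans_lt hqgap)
      _ ≤ q * gap U V / (1 - q * gap U V) :=
        div_one_sub_le_div_one_sub hdual hqgap

theorem statement8
    {B : Type*} [NormedAddCommGroup B] [NormedSpace ℝ B] [CompleteSpace B]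
    (q : ℕ) (U V : Submodule ℝ B)
    (h : (FiniteDimensional ℝ U ∧ FiniteDimensional ℝ V ∧
            Module.finrank ℝ U = q ∧ Module.finrank ℝ V = q) ∨
         (IsClosed (U : Set B) ∧ IsClosed (V : Set B) ∧ codim U = q ∧ codim V = q))
    (hgap : gap U V < 1 / (q : ℝ)) :
    gap V U ≤ (q : ℝ) * gap U V / (1 - (q : ℝ) * gap U V) :=
  statement8_general q U V h hgap

end
end BanachMET
end

section
/- Let B be a real Banach space and q ∈ ℕ. There exists a constant C_q > 0 depending only on q such that for any A ∈ L(B), any q-dimensional subspace V ⊆ B, any inner product (·,·)_V on V whose norm ‖·‖_V satisfies (1/√q)|v| ≤ ‖v‖_V ≤ √q|v| and whose Lebesgue volume coincides with m_V, and any basis v_1, …, v_q of V consisting of |·|-unit vectors that is (·,·)_V-orthogonal, one has det(A | V) ≤ C_q · Π_{i=1}^q |A v_i|. -/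
/-!
Write a vector `x` of the unit ball of `W` as `∑ tᵢ vᵢ`. Orthogonality gives
`tᵢ² p(vᵢ, vᵢ) ≤ p(x, x)`, and the comparison of `p` with the norm gives `p(vᵢ, vᵢ) ≥ 1/q` and
`p(x, x) ≤ q`, so `|tᵢ| ≤ q`. Hence `A` maps the unit ball of `W` into the box
`{∑ sᵢ A vᵢ : |sᵢ| ≤ q}` of `AW`. The diagonal map rescaling each `A vᵢ` by `(q² |A vᵢ|)⁻¹` sends
this box into the unit ball of `AW`, so by the change of variables formula for Haar measures the
box has volume at most `q^{2q} ∏ |A vᵢ| · ω_q`.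
-/

open MeasureTheory Filter Metric Set
open scoped ENNReal NNReal Topology

namespace BanachMET

noncomputable section

variable {B B' : Type*} [NormedAddCommGroup B] [NormedSpace ℝ B]
  [NormedAddCommGroup B'] [NormedSpace ℝ B']

section CoeffBox

variable {E ι : Type*} [NormedAddCommGroup E] [NormedSpace ℝ E] [MeasurableSpace E] [BorelSpace E]
  [FiniteDimensional ℝ E] [Fintype ι]

theorem _root_.Module.Basis.addHaar_abs_repr_le_one_le (μ : Measure E) [μ.IsAddHaarMeasure]
    (b : Module.Basis ι ℝ E) :
    μ {y | ∀ i, |b.repr y i| ≤ 1} ≤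
      ENNReal.ofReal (∏ i, (Fintype.card ι * ‖b i‖)) * μ (closedBall 0 1) := by
  classical
  set c : ι → ℝ := fun i => (Fintype.card ι * ‖b i‖)⁻¹ with hc_def
  have hc : ∀ i, 0 < c i := fun i =>
    inv_pos.2 (mul_pos (Nat.cast_pos.2 (Fintype.card_pos_iff.2 ⟨i⟩)) (norm_pos_iff.2 (b.ne_zero i)))
  set T : E →ₗ[ℝ] E := Matrix.toLin b b (Matrix.diagonal c)
  have hdet : LinearMap.det T = ∏ i, c i := by rw [LinearMap.det_toLin, Matrix.det_diagonal]
  have hbox : {y | ∀ i, |b.repr y i| ≤ 1} ⊆ T ⁻¹' closedBall 0 1 := by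
    intro y hy
    rw [mem_preimage, mem_closedBall_zero_iff, Matrix.toLin_apply]
    calc ‖∑ i, (Matrix.diagonal c).mulVec (b.repr y) i • b i‖
        ≤ ∑ i, ‖(Matrix.diagonal c).mulVec (b.repr y) i • b i‖ := norm_sum_le _ _
      _ ≤ ∑ _i : ι, (Fintype.card ι : ℝ)⁻¹ := Finset.sum_le_sum fun i _ => by
          rw [Matrix.mulVec_diagonal, _root_.norm_smul, norm_mul, Real.norm_of_nonneg (hc i).le,
            Real.norm_eq_abs]
          calc c i * |b.repr y i| * ‖b i‖ ≤ c i * 1 * ‖b i‖ := by gcongr; exact hy i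
            _ = _ := by
              have := norm_pos_iff.2 (b.ne_zero i)
              simp only [hc_def, mul_one, mul_inv_rev]
              field_simp
      _ ≤ 1 := by
          rw [Finset.sum_const, Finset.card_univ, nsmul_eq_mul]
          exact mul_inv_le_one
  calc μ _ ≤ μ (T ⁻¹' closedBall 0 1) := measure_mono hbox
    _ = ENNReal.ofReal |(LinearMap.det T)⁻¹| * μ (closedBall 0 1) :=
        Measure.addHaar_preimage_linearMap μ
          (hdet ▸ Finset.prod_ne_zero_iff.2 fun i _ => (hc i).ne') _
    _ = _ := by
        rw [hdet, ← Finset.prod_inv_distrib,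
          abs_of_pos (Finset.prod_pos fun i _ => inv_pos.2 (hc i))]
        simp only [hc_def, inv_inv]

end CoeffBox

section InducedVolume

variable [MeasurableSpace B] [BorelSpace B]

theorem inducedVolume_eq (E : Submodule ℝ B) [FiniteDimensional ℝ E] :
    inducedVolume E = (ballVol (Module.finrank ℝ E) /
        (Module.finBasis ℝ E).addHaar (closedBall (0 : E) 1)) • (Module.finBasis ℝ E).addHaar :=
  dif_pos ‹_›

instance isAddHaarMeasure_inducedVolume (E : Submodule ℝ B) [FiniteDimensional ℝ E] :
    (inducedVolume E).IsAddHaarMeasure := by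
  rw [inducedVolume_eq]
  exact Measure.IsAddHaarMeasure.smul _
    (ENNReal.div_pos (measure_closedBall_pos _ _ one_pos).ne' measure_closedBall_lt_top.ne).ne'
    (ENNReal.div_ne_top measure_closedBall_lt_top.ne (measure_closedBall_pos _ _ one_pos).ne')

theorem inducedVolume_closedBall (E : Submodule ℝ B) [FiniteDimensional ℝ E] :
    inducedVolume E (closedBall 0 1) = ballVol (Module.finrank ℝ E) := by
  rw [inducedVolume_eq, Measure.smul_apply, smul_eq_mul]
  exact ENNReal.div_mul_cancel (measure_closedBall_pos _ _ one_pos).ne' measure_closedBall_lt_top.ne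

end InducedVolume

theorem detOn_le_of_abs_repr_le_one [MeasurableSpace B'] [BorelSpace B'] {ι : Type*} [Fintype ι]
    (A : B →L[ℝ] B') (W : Submodule ℝ B) [FiniteDimensional ℝ W] (b : Module.Basis ι ℝ W)
    (hb : ∀ x : W, ‖x‖ ≤ 1 → ∀ i, |b.repr x i| ≤ 1) :
    detOn A W ≤ ENNReal.ofReal (∏ i, (Fintype.card ι * ‖A (b i)‖)) := by
  classical
  rw [detOn]
  split_ifs with hinj
  swap
  · exact zero_le
  set F := W.map (A : B →ₗ[ℝ] B')
  let e : W ≃ₗ[ℝ] F := LinearEquiv.ofBijective ((A : B →ₗ[ℝ] B').submoduleMap W)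
    ⟨LinearMap.submoduleMap_injective_of_injOn hinj, LinearMap.submoduleMap_surjective _ _⟩
  have : FiniteDimensional ℝ F := e.finiteDimensional
  refine ENNReal.div_le_of_le_mul ?_
  calc inducedVolume F _ ≤ inducedVolume F {y | ∀ i, |(b.map e).repr y i| ≤ 1} := by
        refine measure_mono ?_
        rintro y ⟨_, ⟨x, hx, rfl⟩, hAx⟩ i
        obtain rfl : y = e x := Subtype.ext hAx.symm
        simpa using hb x (mem_closedBall_zero_iff.1 hx) i
    _ ≤ _ := (b.map e).addHaar_abs_repr_le_one_le _
    _ = _ := by rw [inducedVolume_closedBall, ← e.finrank_eq]; rfl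

namespace IsInnerOn

variable {W : Submodule ℝ B} {p : B → B → ℝ}

def toBilinForm (hp : IsInnerOn W p) : LinearMap.BilinForm ℝ W :=
  LinearMap.mk₂ ℝ (fun x y => p x y)
    (fun x y z => hp.add_left _ x.2 _ y.2 _ z.2)
    (fun c x y => (hp.smul_left c _ x.2 _ y.2).trans (smul_eq_mul _ _).symm)
    (fun x y z => by
      rw [hp.symm _ x.2 _ (y + z).2, Submodule.coe_add, hp.add_left _ y.2 _ z.2 _ x.2,
        hp.symm _ y.2 _ x.2, hp.symm _ z.2 _ x.2])
    (fun c x y => by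
      rw [hp.symm _ x.2 _ (c • y).2, Submodule.coe_smul, hp.smul_left c _ y.2 _ x.2,
        hp.symm _ y.2 _ x.2, smul_eq_mul])

@[simp]
theorem toBilinForm_apply (hp : IsInnerOn W p) (x y : W) : hp.toBilinForm x y = p x y := rfl

theorem apply_eq_sum_sq_repr (hp : IsInnerOn W p) {ι : Type*} [Fintype ι]
    (b : Module.Basis ι ℝ W) (hb : ∀ i j, i ≠ j → p (b i) (b j) = 0) (x : W) :
    p x x = ∑ i, b.repr x i ^ 2 * p (b i) (b i) := by
  change hp.toBilinForm x x = _
  conv_lhs => rw [← b.sum_repr x]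
  simp only [map_sum, map_smul, LinearMap.sum_apply, LinearMap.smul_apply, smul_eq_mul,
    toBilinForm_apply]
  refine Finset.sum_congr rfl fun i _ => ?_
  rw [Finset.sum_eq_single i (fun j _ hji => mul_eq_zero_of_right _ (hb j i hji))
    (fun hi => absurd (Finset.mem_univ i) hi)]
  ring

theorem sq_repr_mul_le (hp : IsInnerOn W p) {ι : Type*} [Fintype ι]
    (b : Module.Basis ι ℝ W) (hb : ∀ i j, i ≠ j → p (b i) (b j) = 0) (x : W) (i : ι) :
    b.repr x i ^ 2 * p (b i) (b i) ≤ p x x := by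
  rw [hp.apply_eq_sum_sq_repr b hb x]
  refine Finset.single_le_sum (f := fun j => b.repr x j ^ 2 * p (b j) (b j))
    (fun j _ => mul_nonneg (sq_nonneg _) (hp.posdef _ (b j).2 ?_).le) (Finset.mem_univ i)
  simpa using b.ne_zero j

theorem abs_repr_le_of_sqrt_comparable (hp : IsInnerOn W p) {q : ℕ}
    (hcomp : ∀ v ∈ W, (Real.sqrt q)⁻¹ * ‖v‖ ≤ Real.sqrt (p v v) ∧
      Real.sqrt (p v v) ≤ Real.sqrt q * ‖v‖)
    {ι : Type*} [Fintype ι] (b : Module.Basis ι ℝ W) (hb1 : ∀ i, ‖(b i : B)‖ = 1)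
    (hb : ∀ i j, i ≠ j → p (b i) (b j) = 0) (x : W) (hx : ‖x‖ ≤ 1) (i : ι) :
    |b.repr x i| ≤ q := by
  have hbi_pos : 0 < p (b i) (b i) := hp.posdef _ (b i).2 (by simpa using b.ne_zero i)
  have hq : (0 : ℝ) < q := Real.sqrt_pos.1 <|
    (Real.sqrt_pos.2 hbi_pos).trans_le <| ((hcomp _ (b i).2).2).trans_eq (by rw [hb1, mul_one])
  have hbi : (q : ℝ)⁻¹ ≤ p (b i) (b i) := by
    have h := (hcomp _ (b i).2).1
    rw [hb1, mul_one, Real.le_sqrt (by positivity) hbi_pos.le, inv_pow,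
      Real.sq_sqrt hq.le] at h
    exact h
  have hxx : p x x ≤ q := (Real.sqrt_le_sqrt_iff hq.le).1 <|
    (hcomp _ x.2).2.trans (mul_le_of_le_one_right (Real.sqrt_nonneg _) hx)
  refine abs_le_of_sq_le_sq ?_ hq.le
  calc b.repr x i ^ 2 = b.repr x i ^ 2 * (q : ℝ)⁻¹ * q := by field_simp
    _ ≤ p x x * q := by
        gcongr
        exact (mul_le_mul_of_nonneg_left hbi (sq_nonneg _)).trans (hp.sq_repr_mul_le b hb x i)
    _ ≤ q ^ 2 := by rw [sq]; gcongr

end IsInnerOn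

theorem statement12_general
    {B : Type*} [NormedAddCommGroup B] [NormedSpace ℝ B]
    [MeasurableSpace B] [BorelSpace B] (q : ℕ) :
    ∃ C : ℝ, 0 < C ∧
      ∀ (A : B →L[ℝ] B) (W : Submodule ℝ B), FiniteDimensional ℝ W →
        Module.finrank ℝ W = q →
      ∀ p : B → B → ℝ, IsInnerOn W p →
        (∀ v ∈ W, (Real.sqrt q)⁻¹ * ‖v‖ ≤ Real.sqrt (p v v) ∧
          Real.sqrt (p v v) ≤ Real.sqrt q * ‖v‖) →
        inducedVolume W {v : W | p (v : B) (v : B) ≤ 1} = ballVol q →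
      ∀ v : Fin q → B, (∀ i, v i ∈ W) → (∀ i, ‖v i‖ = 1) →
        (∀ i j, i ≠ j → p (v i) (v j) = 0) →
        Submodule.span ℝ (Set.range v) = W →
        detOn A W ≤ ENNReal.ofReal (C * ∏ i, ‖A (v i)‖) := by
  refine ⟨((q : ℝ) * q) ^ q, ?_, ?_⟩
  · rcases q.eq_zero_or_pos with rfl | hq
    · simp
    · positivity
  intro A W _ hrk p hp hcomp _ v _ hv1 horth hspan
  have hv : LinearIndependent ℝ v := linearIndependent_iff_card_eq_finrank_span.2 <| by
    rw [Set.finrank, hspan, hrk, Fintype.card_fin]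
  let b : Module.Basis (Fin q) ℝ W := (Module.Basis.span hv).map (LinearEquiv.ofEq _ _ hspan)
  have hb : ∀ i, (b i : B) = v i := fun i => by simp [b, Module.Basis.span_apply]
  have hcoeff := hp.abs_repr_le_of_sqrt_comparable hcomp b (by simpa [hb] using hv1)
    (by simpa [hb] using horth)
  let u := b.unitsSMul fun i => Units.mk0 (q : ℝ) (Nat.cast_ne_zero.2 i.pos.ne')
  calc detOn A W ≤ ENNReal.ofReal (∏ i, (Fintype.card (Fin q) * ‖A (u i)‖)) := by
        refine detOn_le_of_abs_repr_le_one A W u fun x hx i => ?_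
        have hq : (0 : ℝ) < q := Nat.cast_pos.2 i.pos
        rw [Module.Basis.repr_unitsSMul, Units.smul_def, Units.val_inv_eq_inv_val, Units.val_mk0,
          smul_eq_mul, abs_mul, abs_inv, abs_of_pos hq, inv_mul_le_one₀ hq]
        exact hcoeff x hx i
    _ = ENNReal.ofReal (((q : ℝ) * q) ^ q * ∏ i, ‖A (v i)‖) := by
        have hu : ∀ i, ‖A (u i)‖ = q * ‖A (v i)‖ := fun i => by
          rw [Module.Basis.unitsSMul_apply, Units.smul_def, Units.val_mk0, Submodule.coe_smul,
            map_smul, norm_smul, hb, Real.norm_natCast]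
        simp_rw [Fintype.card_fin, hu, ← mul_assoc, Finset.prod_mul_distrib, Finset.prod_const,
          Finset.card_univ, Fintype.card_fin, mul_pow]

theorem statement12
    {B : Type*} [NormedAddCommGroup B] [NormedSpace ℝ B] [CompleteSpace B]
    [MeasurableSpace B] [BorelSpace B] (q : ℕ) :
    ∃ C : ℝ, 0 < C ∧
      ∀ (A : B →L[ℝ] B) (W : Submodule ℝ B), FiniteDimensional ℝ W →
        Module.finrank ℝ W = q →
      ∀ p : B → B → ℝ, IsInnerOn W p →
        (∀ v ∈ W, (Real.sqrt q)⁻¹ * ‖v‖ ≤ Real.sqrt (p v v) ∧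
          Real.sqrt (p v v) ≤ Real.sqrt q * ‖v‖) →
        inducedVolume W {v : W | p (v : B) (v : B) ≤ 1} = ballVol q →
      ∀ v : Fin q → B, (∀ i, v i ∈ W) → (∀ i, ‖v i‖ = 1) →
        (∀ i j, i ≠ j → p (v i) (v j) = 0) →
        Submodule.span ℝ (Set.range v) = W →
        detOn A W ≤ ENNReal.ofReal (C * ∏ i, ‖A (v i)‖) :=
  statement12_general q

end
end BanachMET
end
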